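/- arXiv:2007.10770 — 3 statements merged into one kernel-verified Lean document; each statement's English description precedes it below -/
import Mathlib

section
/- FH-bisimilarity of open automata is an equivalence relation. In particular (transitivity, the non-trivial part): let A₁, A₂, A₃ be open automata with identical holes of the same sorts and pairwise disjoint variable sets, let R be an FH-bisimulation between A₁ and A₂ and R' an FH-bisimulation between A₂ and A₃. Then the relation R'' = {(s,u | Pred_{s,u})} over the states of A₁ and A₃, where Pred_{s,u} = ⋁ over all states t of A₂ with (s,t | Pred_{s,t}) ∈ R and (t,u | Pred'_{t,u}) ∈ R' of (Pred_{s,t} ∧ Pred'_{t,u}), is an FH-bisimulation between A₁ and A₃. Reflexivity and symmetry of FH-bisimilarity also hold (the identity relation with true predicates is an FH-bisimulation of an automaton with itself up to variable renaming, and the inverse of an FH-bisimulation is an FH-bisimulation). -/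
open Classical

namespace FHPNets

/-! Semantic model of symbolic ingredients: terms are interpreted over valuations. -/

/-- Valuations of variables. -/
abbrev Val (Var D : Type) := Var → D
/-- Action terms (actions with variables), interpreted semantically. -/
abbrev ActT (Var D A : Type) := Val Var D → A
/-- Predicates over variables. -/
abbrev PredT (Var D : Type) := Val Var D → Prop
/-- Substitutions (parallel assignments), interpreted as valuation transformers. -/
abbrev PostT (Var D : Type) := Val Var D → Val Var D

/-- Open transition over holes `N` and states `St`. -/
structure OT (Var D A N St : Type) where
  holes : Set N
  holeAct : N → ActT Var D A
  pred : PredT Var D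
  post : PostT Var D
  src : St
  act : ActT Var D A
  tgt : St

/-- One open transition `ot` (from source `ot.src`) is covered, with respect to the
relation `R`, by a family of open transitions of `T₂` starting at `t`. -/
def Covers {Var D A N St₁ St₂ : Type}
    (T₂ : Set (OT Var D A N St₂))
    (R : St₁ → St₂ → Val Var D → Val Var D → Prop)
    (ot : OT Var D A N St₁) (t : St₂) : Prop :=
  ∃ (X : Type) (fam : X → OT Var D A N St₂),
    (∀ x, fam x ∈ T₂ ∧ (fam x).src = t ∧ (fam x).holes = ot.holes) ∧
    ∀ v₁ v₂, R ot.src t v₁ v₂ → ot.pred v₁ →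
      ∃ x, (∀ j ∈ ot.holes, ot.holeAct j v₁ = (fam x).holeAct j v₂) ∧
        (fam x).pred v₂ ∧ ot.act v₁ = (fam x).act v₂ ∧
        R ot.tgt (fam x).tgt (ot.post v₁) ((fam x).post v₂)

/-- Strong FH-bisimulation between two open automata (given by their transition sets). -/
def IsFHBisim {Var D A N St₁ St₂ : Type}
    (T₁ : Set (OT Var D A N St₁)) (T₂ : Set (OT Var D A N St₂))
    (R : St₁ → St₂ → Val Var D → Val Var D → Prop) : Prop :=
  (∀ ot ∈ T₁, ∀ t : St₂, Covers T₂ R ot t) ∧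
  (∀ ot ∈ T₂, ∀ s : St₁, Covers T₁ (fun t s' v₂ v₁ => R s' t v₁ v₂) ot s)

/-! Weak transitions -/

/-- `vis` : keep only the observable (non-`τ`) hole actions, as one-element sequences. -/
noncomputable def visFam {Var D A N : Type} (τ : A) (J' : Set N) (β : N → ActT Var D A) :
    N → List (ActT Var D A) :=
  fun j => if j ∈ J' ∧ β j ≠ (fun _ => τ) then [β j] else []

/-- Weak open transition: each hole performs a sequence of actions. -/
structure WOT (Var D A N St : Type) where
  γ : N → List (ActT Var D A)
  pred : PredT Var D
  post : PostT Var D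
  src : St
  act : ActT Var D A
  tgt : St

/-- The weak open automaton derived from an open automaton, rules WT1, WT2, WT3. -/
inductive Weak {Var D A N St : Type} (τ : A) (T : Set (OT Var D A N St)) :
    WOT Var D A N St → Prop where
  | wt1 (s : St) : Weak τ T ⟨fun _ => [], fun _ => True, id, s, fun _ => τ, s⟩
  | wt2 {ot : OT Var D A N St} (h : ot ∈ T) :
      Weak τ T ⟨visFam τ ot.holes ot.holeAct, ot.pred, ot.post, ot.src, ot.act, ot.tgt⟩
  | wt3 {w₁ w₂ w₃ : WOT Var D A N St}
      (h₁ : Weak τ T w₁) (h₂ : Weak τ T w₂) (h₃ : Weak τ T w₃)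
      (ha₁ : w₁.act = fun _ => τ) (ha₃ : w₃.act = fun _ => τ)
      (hs₁ : w₁.tgt = w₂.src) (hs₂ : w₂.tgt = w₃.src) :
      Weak τ T ⟨fun j => w₁.γ j ++ (w₂.γ j).map (fun a => a ∘ w₁.post)
                  ++ (w₃.γ j).map (fun a => a ∘ (w₂.post ∘ w₁.post)),
                fun v => w₁.pred v ∧ w₂.pred (w₁.post v) ∧ w₃.pred (w₂.post (w₁.post v)),
                w₃.post ∘ w₂.post ∘ w₁.post, w₁.src, w₂.act ∘ w₁.post, w₃.tgt⟩

/-- Coverage of a (strong) open transition by a family of weak open transitions. -/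
def WCovers {Var D A N St₁ St₂ : Type} (τ : A)
    (T₂ : Set (OT Var D A N St₂))
    (R : St₁ → St₂ → Val Var D → Val Var D → Prop)
    (ot : OT Var D A N St₁) (t : St₂) : Prop :=
  ∃ (X : Type) (fam : X → WOT Var D A N St₂),
    (∀ x, Weak τ T₂ (fam x) ∧ (fam x).src = t ∧
      (∀ j, (fam x).γ j ≠ [] ↔ (j ∈ ot.holes ∧ ot.holeAct j ≠ fun _ => τ))) ∧
    ∀ v₁ v₂, R ot.src t v₁ v₂ → ot.pred v₁ →
      ∃ x, (∀ j ∈ ot.holes, ot.holeAct j ≠ (fun _ => τ) →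
              [ot.holeAct j v₁] = ((fam x).γ j).map (fun a => a v₂)) ∧
        (fam x).pred v₂ ∧ ot.act v₁ = (fam x).act v₂ ∧
        R ot.tgt (fam x).tgt (ot.post v₁) ((fam x).post v₂)

/-- Weak FH-bisimulation between two open automata. -/
def IsWeakFHBisim {Var D A N St₁ St₂ : Type} (τ : A)
    (T₁ : Set (OT Var D A N St₁)) (T₂ : Set (OT Var D A N St₂))
    (R : St₁ → St₂ → Val Var D → Val Var D → Prop) : Prop :=
  (∀ ot ∈ T₁, ∀ t : St₂, WCovers τ T₂ R ot t) ∧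
  (∀ ot ∈ T₂, ∀ s : St₁, WCovers τ T₁ (fun t s' v₂ v₁ => R s' t v₁ v₂) ot s)

/-- `compFrom Θ k` is the composition `Θ (k-1) ⊗ ... ⊗ Θ 0` of substitutions
(the identity when `k = 0`). -/
def compFrom {Var D : Type} (Θ : ℕ → PostT Var D) : ℕ → PostT Var D
  | 0 => id
  | k+1 => Θ k ∘ compFrom Θ k

/-- Index-wise concatenation `⧺` of a finite family of indexed sets of sequences. -/
def concatFam {Var D A N : Type} (n : ℕ) (g : ℕ → N → List (ActT Var D A)) :
    N → List (ActT Var D A) :=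
  fun j => ((List.range n).map fun p => g p j).flatten

/-! pNets -/

/-- Synchronisation vector: (partial) family of action terms of the involved sub-pNets
and holes, resulting global action, and guard. -/
structure SyncVec (Var D A N : Type) where
  acts : N → Option (ActT Var D A)
  res : ActT Var D A
  guard : PredT Var D

/-- Parameterised labelled transition system. -/
structure PLTS (Var D A S : Type) where
  init : S
  vars : Set Var
  trans : S → ActT Var D A → PredT Var D → PostT Var D → S → Prop

/-- pNets: hierarchical structures whose leaves are pLTSs (with global leaf names `ι`)
and holes (with global names `N`); sub-pNets and holes of a node share the index set `N`. -/
inductive PNet (Var D A S N ι : Type) : Type where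
  | plts (i : ι) (p : PLTS Var D A S)
  | node (I : Set N) (subs : N → PNet Var D A S N ι) (J : Set N)
      (sorts : N → Set (ActT Var D A)) (svs : Set (SyncVec Var D A N))

namespace PNet

variable {Var D A S N ι : Type}

/-- Holes of a pNet, at all levels. -/
def pholes : PNet Var D A S N ι → Set N
  | plts _ _ => ∅
  | node I subs J _ _ => J ∪ ⋃ i ∈ I, pholes (subs i)

/-- Leaves of a pNet (names of the pLTSs occurring in it). -/
def pleaves : PNet Var D A S N ι → Set ι
  | plts i _ => {i}
  | node I subs _ _ _ => ⋃ i ∈ I, pleaves (subs i)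

/-- Variables of a pNet. -/
def pvars : PNet Var D A S N ι → Set Var
  | plts _ p => p.vars
  | node I subs _ _ _ => ⋃ i ∈ I, pvars (subs i)

/-- Sort of a pNet. -/
def psort : PNet Var D A S N ι → Set (ActT Var D A)
  | plts _ p => {α | ∃ s g po s', p.trans s α g po s'}
  | node _ _ _ _ svs => (fun sv => sv.res) '' svs

/-- Initial (tuple) states of a pNet. -/
def IsInit : PNet Var D A S N ι → (ι → S) → Prop
  | plts i p, f => f i = p.init
  | node I subs _ _ _, f => ∀ i ∈ I, IsInit (subs i) f

/-- `P` is a pNet node (not a pLTS). -/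
def IsNode : PNet Var D A S N ι → Prop
  | plts _ _ => False
  | node _ _ _ _ _ => True

/-- Fill the (top-level) hole `j₀` of a pNet with the pNet `Q`:
the index `j₀` moves from the holes to the sub-pNets. -/
def fill [DecidableEq N] : PNet Var D A S N ι → N → PNet Var D A S N ι → PNet Var D A S N ι
  | plts i p, _, _ => plts i p
  | node I subs J sorts svs, j₀, Q =>
      node (I ∪ {j₀}) (Function.update subs j₀ Q) (J \ {j₀}) sorts svs

/-- Fill several holes in sequence. -/
def fills [DecidableEq N] (P : PNet Var D A S N ι) :
    List (N × PNet Var D A S N ι) → PNet Var D A S N ι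
  | [] => P
  | (j, Q) :: rest => fills (fill P j Q) rest

/-- Well-formedness of pNets : disjointness conditions of the paper's definition. -/
def WF : PNet Var D A S N ι → Prop
  | plts _ _ => True
  | node I subs J _ _ =>
      (∀ i ∈ I, WF (subs i)) ∧ Disjoint I J ∧
      (∀ i ∈ I, ∀ i' ∈ I, i ≠ i' →
        Disjoint (pvars (subs i)) (pvars (subs i')) ∧
        Disjoint (pleaves (subs i)) (pleaves (subs i')) ∧
        Disjoint (pholes (subs i)) (pholes (subs i'))) ∧
      (∀ i ∈ I, Disjoint (pholes (subs i)) J)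

/-- Open automaton semantics of pNets (rules Tr1 and Tr2). -/
inductive Sem : PNet Var D A S N ι → OT Var D A N (ι → S) → Prop where
  | tr1 {i : ι} {p : PLTS Var D A S} (β : N → ActT Var D A)
      {α : ActT Var D A} {g : PredT Var D} {po : PostT Var D} {src tgt : ι → S}
      (htr : p.trans (src i) α g po (tgt i))
      (hoth : ∀ k, k ≠ i → tgt k = src k)
      (hloc : ∀ v x, x ∉ p.vars → po v x = v x) :
      Sem (plts i p) ⟨∅, β, g, po, src, α, tgt⟩
  | tr2 {I : Set N} {subs : N → PNet Var D A S N ι} {J : Set N}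
      {sorts : N → Set (ActT Var D A)} {svs : Set (SyncVec Var D A N)}
      {sv : SyncVec Var D A N} {f : N → OT Var D A N (ι → S)}
      (β : N → ActT Var D A) (po : PostT Var D) (src tgt : ι → S)
      (hsv : sv ∈ svs)
      (hsub : ∀ m ∈ I, (sv.acts m).isSome → Sem (subs m) (f m))
      (hβdeep : ∀ m ∈ I, (sv.acts m).isSome → ∀ j ∈ (f m).holes, β j = (f m).holeAct j)
      (hβtop : ∀ j ∈ J, ∀ a, sv.acts j = some a → β j = a)
      (hpostIn : ∀ m ∈ I, (sv.acts m).isSome → ∀ v x, x ∈ pvars (subs m) →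
          po v x = (f m).post v x)
      (hpostOut : ∀ v x, (∀ m ∈ I, (sv.acts m).isSome → x ∉ pvars (subs m)) → po v x = v x)
      (hsrc : ∀ m ∈ I, (sv.acts m).isSome → ∀ k ∈ pleaves (subs m),
          src k = (f m).src k ∧ tgt k = (f m).tgt k)
      (hstay : ∀ k, (∀ m ∈ I, (sv.acts m).isSome → k ∉ pleaves (subs m)) → tgt k = src k) :
      Sem (node I subs J sorts svs)
        ⟨{j | j ∈ J ∧ (sv.acts j).isSome} ∪
            ⋃ m ∈ {m | m ∈ I ∧ (sv.acts m).isSome}, (f m).holes,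
         β,
         fun v => (∀ m ∈ I, ∀ a, sv.acts m = some a → (f m).pred v ∧ (f m).act v = a v) ∧
           sv.guard v,
         po, src, sv.res, tgt⟩

/-- The set of open transitions of a pNet: its open automaton semantics. -/
def SemSet (P : PNet Var D A S N ι) : Set (OT Var D A N (ι → S)) := {ot | Sem P ot}

/-- Two pNets are FH-bisimilar. -/
def BisimPNet (P Q : PNet Var D A S N ι) : Prop :=
  pholes P = pholes Q ∧
  ∃ R : (ι → S) → (ι → S) → Val Var D → Val Var D → Prop,
    IsFHBisim (SemSet P) (SemSet Q) R ∧
    ∀ f g, IsInit P f → IsInit Q g → ∃ v₁ v₂, R f g v₁ v₂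

/-- Two pNets are weak FH-bisimilar. -/
def WeakBisimPNet (τ : A) (P Q : PNet Var D A S N ι) : Prop :=
  pholes P = pholes Q ∧
  ∃ R : (ι → S) → (ι → S) → Val Var D → Val Var D → Prop,
    IsWeakFHBisim τ (SemSet P) (SemSet Q) R ∧
    ∀ f g, IsInit P f → IsInit Q g → ∃ v₁ v₂, R f g v₁ v₂

/-- The synchronisation vector `⟨(i ↦ τ)⟩ → τ [True]`. -/
def TauVec [DecidableEq N] (τ : A) (i : N) : SyncVec Var D A N :=
  ⟨fun n => if n = i then some (fun _ => τ) else none, fun _ => τ, fun _ => True⟩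

/-- A pNet cannot observe silent actions (condition on synchronisation vectors,
required at every level of the structure). -/
def CannotObserve [DecidableEq N] (τ : A) : PNet Var D A S N ι → Prop
  | plts _ _ => True
  | node I subs J _ svs =>
      (∀ i ∈ I ∪ J, TauVec τ i ∈ svs) ∧
      (∀ sv ∈ svs, ∀ j ∈ J, ∀ a, sv.acts j = some a → a = (fun _ => τ) →
        (sv.res = fun _ => τ) ∧ ∀ n, n ≠ j → sv.acts n = none) ∧
      (∀ i ∈ I, CannotObserve τ (subs i))

end PNet

/-- An open automaton (with holes `J`) cannot observe `τ` actions. -/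
def OANonObs {Var D A N St : Type} (τ : A) (J : Set N) (T : Set (OT Var D A N St)) : Prop :=
  (∀ j ∈ J, ∀ s : St, ∃ β : N → ActT Var D A,
      β j = (fun _ => τ) ∧
      (⟨{j}, β, fun _ => True, id, s, fun _ => τ, s⟩ : OT Var D A N St) ∈ T) ∧
  (∀ ot ∈ T, ∀ j ∈ ot.holes, ot.holeAct j = (fun _ => τ) →
      ot.act = (fun _ => τ) ∧ ot.src = ot.tgt ∧ ot.pred = (fun _ => True) ∧
        ot.post = id ∧ ot.holes = {j})


/-- FH-bisimilarity of open automata is an equivalence relation: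
reflexivity (the identity relation with true predicates, up to variable renaming),
symmetry (the inverse of an FH-bisimulation is an FH-bisimulation), and transitivity
(the composition `R''` of an FH-bisimulation `R` between `A₁`, `A₂` and an
FH-bisimulation `R'` between `A₂`, `A₃`, whose predicate relating `s` and `u` is the
disjunction over the intermediate states `t` of `A₂` of `Pred_{s,t} ∧ Pred'_{t,u}`,
is an FH-bisimulation between `A₁` and `A₃`). -/
theorem fhBisim_isEquivalence {Var D A N : Type} :
    (∀ (St : Type) (T : Set (OT Var D A N St)),
      IsFHBisim T T (fun s t v₁ v₂ => s = t ∧ v₁ = v₂)) ∧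
    (∀ (St₁ St₂ : Type) (T₁ : Set (OT Var D A N St₁)) (T₂ : Set (OT Var D A N St₂))
      (R : St₁ → St₂ → Val Var D → Val Var D → Prop),
      IsFHBisim T₁ T₂ R → IsFHBisim T₂ T₁ (fun t s v₂ v₁ => R s t v₁ v₂)) ∧
    (∀ (St₁ St₂ St₃ : Type)
      (T₁ : Set (OT Var D A N St₁)) (T₂ : Set (OT Var D A N St₂))
      (T₃ : Set (OT Var D A N St₃))
      (R : St₁ → St₂ → Val Var D → Val Var D → Prop)
      (R' : St₂ → St₃ → Val Var D → Val Var D → Prop),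
      IsFHBisim T₁ T₂ R → IsFHBisim T₂ T₃ R' →
      IsFHBisim T₁ T₃
        (fun s u v₁ v₃ => ∃ (t : St₂) (v₂ : Val Var D), R s t v₁ v₂ ∧ R' t u v₂ v₃)) := by
  refine ⟨?_, ?_, ?_⟩
  · -- reflexivity
    intro St T
    have cov : ∀ ot ∈ T, ∀ t : St,
        Covers T (fun s t v₁ v₂ => s = t ∧ v₁ = v₂) ot t := by
      intro ot hot t
      refine ⟨PLift (ot.src = t), fun _ => ot, fun x => ⟨hot, x.down, rfl⟩, ?_⟩
      rintro v₁ v₂ ⟨hst, rfl⟩ _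
      exact ⟨⟨hst⟩, fun j _ => rfl, ‹_›, rfl, rfl, rfl⟩
    refine ⟨cov, ?_⟩
    intro ot hot s
    obtain ⟨X, fam, h1, h2⟩ := cov ot hot s
    refine ⟨X, fam, h1, ?_⟩
    rintro v₁ v₂ ⟨hst, hv⟩ hp
    subst hv
    obtain ⟨x, hβ, hpr, hact, h', h''⟩ := h2 v₂ v₂ ⟨hst.symm, rfl⟩ hp
    exact ⟨x, hβ, hpr, hact, h'.symm, h''.symm⟩
  · -- symmetry
    rintro St₁ St₂ T₁ T₂ R ⟨h1, h2⟩
    exact ⟨h2, h1⟩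
  · -- transitivity
    rintro St₁ St₂ St₃ T₁ T₂ T₃ R R' ⟨h12, h21⟩ ⟨h23, h32⟩
    constructor
    · intro ot hot u
      -- for each t : St₂, a covering family of ot from t in T₂
      choose X fam hfam hcov using fun t => h12 ot hot t
      -- for each such transition, a covering family from u in T₃
      choose Y g hg hcov' using fun t x => h23 (fam t x) (hfam t x).1 u
      refine ⟨Σ t : St₂, Σ x : X t, Y t x, fun y => g y.1 y.2.1 y.2.2, ?_, ?_⟩
      · rintro ⟨t, x, y⟩
        refine ⟨(hg t x y).1, (hg t x y).2.1, ?_⟩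
        rw [(hg t x y).2.2, (hfam t x).2.2]
      · rintro v₁ v₃ ⟨t, v₂, hR, hR'⟩ hp
        obtain ⟨x, hβ, hpr, hact, hRt⟩ := hcov t v₁ v₂ hR hp
        have hR'src : R' (fam t x).src u v₂ v₃ := by rw [(hfam t x).2.1]; exact hR'
        obtain ⟨y, hβ', hpr', hact', hR't⟩ := hcov' t x v₂ v₃ hR'src hpr
        refine ⟨⟨t, x, y⟩, ?_, hpr', hact.trans hact', (fam t x).tgt, (fam t x).post v₂,
          hRt, hR't⟩
        intro j hj
        have hj' : j ∈ (fam t x).holes := by rw [(hfam t x).2.2]; exact hj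
        exact (hβ j hj).trans (hβ' j hj')
    · intro ot hot s
      choose X fam hfam hcov using fun t => h32 ot hot t
      choose Y g hg hcov' using fun t x => h21 (fam t x) (hfam t x).1 s
      refine ⟨Σ t : St₂, Σ x : X t, Y t x, fun y => g y.1 y.2.1 y.2.2, ?_, ?_⟩
      · rintro ⟨t, x, y⟩
        refine ⟨(hg t x y).1, (hg t x y).2.1, ?_⟩
        rw [(hg t x y).2.2, (hfam t x).2.2]
      · rintro v₃ v₁ ⟨t, v₂, hR, hR'⟩ hp
        obtain ⟨x, hβ, hpr, hact, hRt⟩ := hcov t v₃ v₂ hR' hp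
        have hRsrc : R s (fam t x).src v₁ v₂ := by rw [(hfam t x).2.1]; exact hR
        obtain ⟨y, hβ', hpr', hact', hR't⟩ := hcov' t x v₂ v₁ hRsrc hpr
        refine ⟨⟨t, x, y⟩, ?_, hpr', hact.trans hact', (fam t x).tgt, (fam t x).post v₂,
          hR't, hRt⟩
        intro j hj
        have hj' : j ∈ (fam t x).holes := by rw [(hfam t x).2.2]; exact hj
        exact (hβ j hj).trans (hβ' j hj')

end FHPNets
end

section
/- Open transition decomposition: let P and Q be pNets that are not pLTSs, with Leaves(Q) = (p_l)_{l∈L_Q}, and suppose P[Q]_{j₀} ⊨ ((β_j)_{j∈J}, Pred, Post ⊢ ⟨s_i^{i∈L}⟩ -α→ ⟨s'_i^{i∈L}⟩) where Q takes part in the reduction, i.e. J ∩ Holes(Q) ≠ ∅ or there exists i ∈ L_Q with s_i ≠ s'_i. Then there exist an action α_Q, predicates Pred' and Pred'', and substitutions Post' and Post'' such that: P ⊨ ((β_j)_{j∈(J∖Holes(Q))∪{j₀}}, Pred', Post' ⊢ ⟨s_i^{i∈L∖L_Q}⟩ -α→ ⟨s'_i^{i∈L∖L_Q}⟩), Q ⊨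 ((β_j)_{j∈J∩Holes(Q)}, Pred'', Post'' ⊢ ⟨s_i^{i∈L_Q}⟩ -α_Q→ ⟨s'_i^{i∈L_Q}⟩), Pred ⟺ Pred' ∧ Pred'' ∧ (α_Q = β_{j₀}), and Post = Post' ⊎ Post'' where Post'' is the restriction of Post to the variables of Q. -/
open Classical

namespace FHPNets

open PNet

/-- Auxiliary: the holes of an open transition of `P` are holes of `P`. -/
lemma sem_holes_subset {Var D A S N ι : Type} {P : PNet Var D A S N ι}
    {ot : OT Var D A N (ι → S)} (h : Sem P ot) : ot.holes ⊆ pholes P := by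
  induction h with
  | tr1 => intro j hj; simp at hj
  | tr2 β po src tgt hsv hsub hβdeep hβtop hpostIn hpostOut hsrc hstay ih =>
    intro j hj
    simp only [pholes, Set.mem_union, Set.mem_iUnion, Set.mem_setOf_eq] at hj ⊢
    rcases hj with hj | hj
    · exact Or.inl hj.1
    · obtain ⟨m, hm, hjm⟩ := hj
      exact Or.inr (Exists.intro m (Exists.intro hm.1 (ih m hm.1 hm.2 hjm)))

/-- Auxiliary: the post of an open transition of `P` only touches variables of `P`. -/
lemma sem_post_out {Var D A S N ι : Type} {P : PNet Var D A S N ι}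
    {ot : OT Var D A N (ι → S)} (h : Sem P ot) :
    ∀ v x, x ∉ pvars P → ot.post v x = v x := by
  induction h with
  | tr1 β htr hoth hloc => exact fun v x hx => hloc v x hx
  | tr2 β po src tgt hsv hsub hβdeep hβtop hpostIn hpostOut hsrc hstay ih =>
    intro v x hx
    simp only [pvars, Set.mem_iUnion, not_exists] at hx
    exact hpostOut v x (fun m hm hs hxm => hx m hm hxm)

/-- open transition decomposition. If `P` and `Q` are pNets that are not
pLTSs (so `P = node I subs J sorts svs`), `j₀ ∈ J`, and the (well-formed) composition
`P[Q]_{j₀}` has an open transition in which `Q` takes part (either a hole of `Q` is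
involved, or a leaf of `Q` changes its state), then this open transition decomposes into
an open transition of `P` (over the holes `(J' \ Holes Q) ∪ {j₀}`, unchanged label `α`,
and states restricted to the leaves of `P`) and an open transition of `Q` (over the holes
`J' ∩ Holes Q`, with some label `α_Q`, on the leaves of `Q`), such that
`Pred ⟺ Pred' ∧ Pred'' ∧ α_Q = β_{j₀}` and `Post = Post' ⊎ Post''` where `Post''` is the
restriction of `Post` to the variables of `Q`. -/
theorem openTransition_decomposition {Var D A S N ι : Type} [DecidableEq N]
    (I : Set N) (subs : N → PNet Var D A S N ι) (J : Set N)
    (sorts : N → Set (ActT Var D A)) (svs : Set (SyncVec Var D A N))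
    (Q : PNet Var D A S N ι) (j₀ : N)
    (hQnode : IsNode Q)
    (hj₀ : j₀ ∈ J) (hj₀I : j₀ ∉ I)
    (hWFP : WF (PNet.node I subs J sorts svs))
    (hWFPQ : WF (fill (PNet.node I subs J sorts svs) j₀ Q))
    (hvars : Disjoint (pvars (PNet.node I subs J sorts svs)) (pvars Q))
    (hleaves : Disjoint (pleaves (PNet.node I subs J sorts svs)) (pleaves Q))
    (hholes : Disjoint (pholes (PNet.node I subs J sorts svs)) (pholes Q))
    (ot : OT Var D A N (ι → S))
    (hsem : Sem (fill (PNet.node I subs J sorts svs) j₀ Q) ot)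
    (hpart : (ot.holes ∩ pholes Q).Nonempty ∨ ∃ i ∈ pleaves Q, ot.src i ≠ ot.tgt i) :
    ∃ (otP otQ : OT Var D A N (ι → S)),
      Sem (PNet.node I subs J sorts svs) otP ∧ Sem Q otQ ∧
      -- hole families of the two decomposed transitions
      otP.holes = (ot.holes \ pholes Q) ∪ {j₀} ∧
      (∀ j ∈ ot.holes \ pholes Q, otP.holeAct j = ot.holeAct j) ∧
      otQ.holes = ot.holes ∩ pholes Q ∧
      (∀ j ∈ ot.holes ∩ pholes Q, otQ.holeAct j = ot.holeAct j) ∧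
      -- the label of `P`'s transition is the global label
      otP.act = ot.act ∧
      -- states
      (∀ i, i ∉ pleaves Q → otP.src i = ot.src i ∧ otP.tgt i = ot.tgt i) ∧
      (∀ i ∈ pleaves Q, otQ.src i = ot.src i ∧ otQ.tgt i = ot.tgt i) ∧
      -- Pred ⟺ Pred' ∧ Pred'' ∧ α_Q = β_{j₀}
      (∀ v, ot.pred v ↔ (otP.pred v ∧ otQ.pred v ∧ otQ.act v = otP.holeAct j₀ v)) ∧
      -- Post = Post' ⊎ Post'', Post'' the restriction of Post to the variables of Q
      (∀ v x, x ∈ pvars Q → ot.post v x = otQ.post v x) ∧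
      (∀ v x, x ∉ pvars Q → ot.post v x = otP.post v x) ∧
      (∀ v x, x ∉ pvars Q → otQ.post v x = v x) := by
  classical
  obtain ⟨hWFsubs, hIJ, hpair, hholesJ⟩ := hWFP
  have hdisjJQ : ∀ j ∈ J, j ∉ pholes Q := by
    intro j hj
    exact Set.disjoint_left.mp hholes (Set.mem_union_left _ hj)
  have hsubQ : ∀ m ∈ I, ∀ {j}, j ∈ pholes (subs m) → j ∉ pholes Q := by
    intro m hm j hj
    refine Set.disjoint_left.mp hholes (Set.mem_union_right _ ?_)
    exact Set.mem_biUnion hm hj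
  have hleavesQ : ∀ m ∈ I, ∀ {k}, k ∈ pleaves (subs m) → k ∉ pleaves Q := by
    intro m hm k hk
    exact Set.disjoint_left.mp hleaves (Set.mem_biUnion hm hk)
  have hvarsQ : ∀ m ∈ I, ∀ {x}, x ∈ pvars (subs m) → x ∉ pvars Q := by
    intro m hm x hx
    exact Set.disjoint_left.mp hvars (Set.mem_biUnion hm hx)
  have hupd : ∀ m ∈ I, Function.update subs j₀ Q m = subs m := by
    intro m hm
    exact Function.update_of_ne (by rintro rfl; exact hj₀I hm) _ _
  have hupdj₀ : Function.update subs j₀ Q j₀ = Q := Function.update_self _ _ _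
  have hmemj₀ : j₀ ∈ I ∪ {j₀} := Set.mem_union_right _ rfl
  simp only [fill] at hsem
  cases hsem with
  | tr2 β po src tgt hsv hsub hβdeep hβtop hpostIn hpostOut hsrc hstay =>
    rename_i sv f
    -- Q takes part, hence the vector involves j₀
    have hj₀some : (sv.acts j₀).isSome = true := by
      by_contra hns
      rcases hpart with ⟨j, hj⟩ | ⟨i, hiQ, hne⟩
      · rw [Set.mem_inter_iff] at hj
        obtain ⟨hj1, hj2⟩ := hj
        rw [Set.mem_union] at hj1
        rcases hj1 with hj1 | hj1
        · exact hdisjJQ j hj1.1.1 hj2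
        · simp only [Set.mem_iUnion, Set.mem_setOf_eq] at hj1
          obtain ⟨m, ⟨hm1, hm2⟩, hjm⟩ := hj1
          rw [Set.mem_union, Set.mem_singleton_iff] at hm1
          rcases hm1 with hm1 | rfl
          · have hQs := hsub m (Set.mem_union_left _ hm1) hm2
            rw [hupd m hm1] at hQs
            exact hsubQ m hm1 (sem_holes_subset hQs hjm) hj2
          · exact hns hm2
      · have : tgt i = src i := by
          apply hstay
          intro m hm1 hm2
          rw [Set.mem_union, Set.mem_singleton_iff] at hm1
          rcases hm1 with hm1 | rfl
          · rw [hupd m hm1]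
            exact fun h => hleavesQ m hm1 h hiQ
          · exact absurd hm2 hns
        exact hne this.symm
    obtain ⟨a, ha⟩ := Option.isSome_iff_exists.mp hj₀some
    have hQsem : Sem Q (f j₀) := by
      have h := hsub j₀ hmemj₀ hj₀some
      rwa [hupdj₀] at h
    have hQholesSub : (f j₀).holes ⊆ pholes Q := sem_holes_subset hQsem
    have hfm : ∀ m ∈ I, (sv.acts m).isSome = true → Sem (subs m) (f m) := by
      intro m hm hs
      have h := hsub m (Set.mem_union_left _ hm) hs
      rwa [hupd m hm] at h
    -- the decomposed transition of P
    refine ⟨⟨{j | j ∈ J ∧ (sv.acts j).isSome} ∪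
        ⋃ m ∈ {m | m ∈ I ∧ (sv.acts m).isSome}, (f m).holes,
        Function.update β j₀ a,
        fun v => (∀ m ∈ I, ∀ b, sv.acts m = some b → (f m).pred v ∧ (f m).act v = b v) ∧
          sv.guard v,
        fun v x => if x ∈ pvars Q then v x else po v x,
        src, sv.res,
        fun i => if i ∈ pleaves Q then src i else tgt i⟩, f j₀,
      ?_, hQsem, ?_, ?_, ?_, ?_, rfl, ?_, ?_, ?_, ?_, ?_, ?_⟩
    · -- Sem of P's transition
      refine Sem.tr2 (sv := sv) (f := f) _ _ _ _ hsv hfm ?_ ?_ ?_ ?_ ?_ ?_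
      · intro m hm hs j hj
        have hβ := hβdeep m (Set.mem_union_left _ hm) hs j hj
        have hne : j ≠ j₀ := by
          rintro rfl
          have hjP : j ∈ pholes (subs m) := sem_holes_subset (hfm m hm hs) hj
          exact Set.disjoint_left.mp (hholesJ m hm) hjP hj₀
        rw [Function.update_of_ne hne]
        exact hβ
      · intro j hj b hb
        by_cases hje : j = j₀
        · subst hje
          rw [ha] at hb
          cases hb
          exact Function.update_self _ _ _
        · rw [Function.update_of_ne hje]
          exact hβtop j ⟨hj, hje⟩ b hb
      · intro m hm hs v x hx
        have hxQ : x ∉ pvars Q := hvarsQ m hm hx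
        simp only [if_neg hxQ]
        exact hpostIn m (Set.mem_union_left _ hm) hs v x (by rw [hupd m hm]; exact hx)
      · intro v x hx
        by_cases hxQ : x ∈ pvars Q
        · simp only [if_pos hxQ]
        · simp only [if_neg hxQ]
          apply hpostOut v x
          intro m hm1 hm2
          rw [Set.mem_union, Set.mem_singleton_iff] at hm1
          rcases hm1 with hm1 | rfl
          · rw [hupd m hm1]; exact hx m hm1 hm2
          · rw [hupdj₀]; exact hxQ
      · intro m hm hs k hk
        have hkQ : k ∉ pleaves Q := hleavesQ m hm hk
        have h := hsrc m (Set.mem_union_left _ hm) hs k (by rw [hupd m hm]; exact hk)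
        exact ⟨h.1, by simp only [if_neg hkQ]; exact h.2⟩
      · intro k hk
        by_cases hkQ : k ∈ pleaves Q
        · simp only [if_pos hkQ]
        · simp only [if_neg hkQ]
          apply hstay
          intro m hm1 hm2
          rw [Set.mem_union, Set.mem_singleton_iff] at hm1
          rcases hm1 with hm1 | rfl
          · rw [hupd m hm1]; exact hk m hm1 hm2
          · rw [hupdj₀]; exact hkQ
    · -- hole set of P's transition
      ext j
      simp only [Set.mem_union, Set.mem_setOf_eq, Set.mem_diff, Set.mem_singleton_iff,
        Set.mem_iUnion]
      constructor
      · rintro (⟨hjJ, hjs⟩ | ⟨m, ⟨hm1, hm2⟩, hjm⟩)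
        · by_cases hje : j = j₀
          · exact Or.inr hje
          · exact Or.inl ⟨Or.inl ⟨⟨hjJ, hje⟩, hjs⟩, hdisjJQ j hjJ⟩
        · refine Or.inl ⟨Or.inr ⟨m, ⟨⟨Or.inl hm1, hm2⟩, hjm⟩⟩, ?_⟩
          exact hsubQ m hm1 (sem_holes_subset (hfm m hm1 hm2) hjm)
      · rintro (⟨h1 | ⟨m, ⟨hm1, hm2⟩, hjm⟩, hjQ⟩ | rfl)
        · exact Or.inl ⟨h1.1.1, h1.2⟩
        · rcases hm1 with hm1 | rfl
          · exact Or.inr ⟨m, ⟨⟨hm1, hm2⟩, hjm⟩⟩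
          · exact absurd (hQholesSub hjm) hjQ
        · exact Or.inl ⟨hj₀, hj₀some⟩
    · -- hole actions of P's transition
      intro j hj
      obtain ⟨hj1, hjQ⟩ := hj
      have hne : j ≠ j₀ := by
        rintro rfl
        rw [Set.mem_union] at hj1
        rcases hj1 with hj1 | hj1
        · exact hj1.1.2 rfl
        · simp only [Set.mem_iUnion, Set.mem_setOf_eq] at hj1
          obtain ⟨m, ⟨hm1, hm2⟩, hjm⟩ := hj1
          rw [Set.mem_union, Set.mem_singleton_iff] at hm1
          rcases hm1 with hm1 | rfl
          · exact Set.disjoint_left.mp (hholesJ m hm1)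
              (sem_holes_subset (hfm m hm1 hm2) hjm) hj₀
          · exact hjQ (hQholesSub hjm)
      exact Function.update_of_ne hne _ _
    · -- hole set of Q's transition
      ext j
      simp only [Set.mem_inter_iff, Set.mem_union, Set.mem_setOf_eq, Set.mem_iUnion]
      constructor
      · intro hj
        exact ⟨Or.inr ⟨j₀, ⟨⟨Set.mem_union_right _ rfl, hj₀some⟩, hj⟩⟩, hQholesSub hj⟩
      · rintro ⟨hj1 | ⟨m, ⟨hm1, hm2⟩, hjm⟩, hjQ⟩
        · exact absurd hjQ (hdisjJQ j hj1.1.1)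
        · rcases hm1 with hm1 | hm1
          · exact absurd hjQ (hsubQ m hm1 (sem_holes_subset (hfm m hm1 hm2) hjm))
          · rw [Set.mem_singleton_iff] at hm1
            subst hm1
            exact hjm
    · -- hole actions of Q's transition
      intro j hj
      rw [Set.mem_inter_iff] at hj
      have hjf : j ∈ (f j₀).holes := by
        obtain ⟨hj1, hjQ⟩ := hj
        rw [Set.mem_union] at hj1
        rcases hj1 with hj1 | hj1
        · exact absurd hjQ (hdisjJQ j hj1.1.1)
        · simp only [Set.mem_iUnion, Set.mem_setOf_eq] at hj1
          obtain ⟨m, ⟨hm1, hm2⟩, hjm⟩ := hj1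
          rw [Set.mem_union, Set.mem_singleton_iff] at hm1
          rcases hm1 with hm1 | rfl
          · exact absurd hjQ (hsubQ m hm1 (sem_holes_subset (hfm m hm1 hm2) hjm))
          · exact hjm
      exact (hβdeep j₀ hmemj₀ hj₀some j hjf).symm
    · -- states of P's transition
      intro i hiQ
      exact ⟨rfl, by simp only [if_neg hiQ]⟩
    · -- states of Q's transition
      intro i hi
      have h := hsrc j₀ hmemj₀ hj₀some i (by rw [hupdj₀]; exact hi)
      exact ⟨h.1.symm, h.2.symm⟩
    · -- predicates
      intro v
      constructor
      · rintro ⟨h1, h2⟩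
        refine ⟨⟨fun m hm b hb => h1 m (Set.mem_union_left _ hm) b hb, h2⟩,
          (h1 j₀ hmemj₀ a ha).1, ?_⟩
        simp only [Function.update_self]
        exact (h1 j₀ hmemj₀ a ha).2
      · rintro ⟨⟨hP1, hP2⟩, hQ1, hQ2⟩
        refine ⟨fun m hm b hb => ?_, hP2⟩
        rw [Set.mem_union, Set.mem_singleton_iff] at hm
        rcases hm with hm | rfl
        · exact hP1 m hm b hb
        · rw [ha] at hb
          cases hb
          simp only [Function.update_self] at hQ2
          exact ⟨hQ1, hQ2⟩
    · -- post on the variables of Q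
      intro v x hx
      exact hpostIn j₀ hmemj₀ hj₀some v x (by rw [hupdj₀]; exact hx)
    · -- post outside the variables of Q
      intro v x hx
      simp only [if_neg hx]
    · -- Q's post is local
      intro v x hx
      exact sem_post_out hQsem v x hx

end FHPNets
end

section
/- Open transition composition with inactive hole: let P be a pNet with hole j₀, Q a pNet with Leaves(Q) indexed by L_Q, and suppose j₀ ∉ J and P ⊨ ((β_j)_{j∈J}, Pred, Post ⊢ ⟨s_i^{i∈L}⟩ -α→ ⟨s'_i^{i∈L}⟩). Then for any state ⟨s_i^{i∈L_Q}⟩ of Q, P[Q]_{j₀} ⊨ ((β_j)_{j∈J}, Pred, Post ⊢ ⟨s_i^{i∈L} ⊎ s_i^{i∈L_Q}⟩ -α→ ⟨s'_i^{i∈L} ⊎ s_i^{i∈L_Q}⟩), i.e. the open transition of P lifts to the composition with the state of Q unchanged. -/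
open Classical

namespace FHPNets

open PNet

/-- open transition composition with inactive hole. If `j₀` is a hole of
`P = node I subs J sorts svs` that does not appear in the hole family of an open
transition of `P`, then for any pNet `Q` and any state `sq` of `Q`, the open transition
of `P` lifts to `P[Q]_{j₀}`: same holes, hole actions, predicate, post and label, with
the state of `Q` (given by `sq` on the leaves of `Q`) unchanged. -/
theorem openTransition_composition_inactive {Var D A S N ι : Type} [DecidableEq N]
    (I : Set N) (subs : N → PNet Var D A S N ι) (J : Set N)
    (sorts : N → Set (ActT Var D A)) (svs : Set (SyncVec Var D A N))
    (Q : PNet Var D A S N ι) (j₀ : N)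
    (hj₀ : j₀ ∈ J) (hj₀I : j₀ ∉ I)
    (hWFP : WF (PNet.node I subs J sorts svs))
    (hWFPQ : WF (fill (PNet.node I subs J sorts svs) j₀ Q))
    (hvars : Disjoint (pvars (PNet.node I subs J sorts svs)) (pvars Q))
    (hleaves : Disjoint (pleaves (PNet.node I subs J sorts svs)) (pleaves Q))
    (otP : OT Var D A N (ι → S))
    (hsemP : Sem (PNet.node I subs J sorts svs) otP)
    (hj₀holes : j₀ ∉ otP.holes)
    (sq : ι → S) :
    ∃ ot : OT Var D A N (ι → S),
      Sem (fill (PNet.node I subs J sorts svs) j₀ Q) ot ∧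
      ot.holes = otP.holes ∧
      (∀ j ∈ otP.holes, ot.holeAct j = otP.holeAct j) ∧
      ot.act = otP.act ∧
      (∀ v, ot.pred v ↔ otP.pred v) ∧
      (∀ v x, ot.post v x = otP.post v x) ∧
      -- the state of `Q` is `sq`, unchanged
      (∀ i ∈ pleaves Q, ot.src i = sq i ∧ ot.tgt i = sq i) ∧
      (∀ i, i ∉ pleaves Q → ot.src i = otP.src i ∧ ot.tgt i = otP.tgt i) := by
  classical
  cases hsemP with
  | tr2 β po src tgt hsv hsub hβdeep hβtop hpostIn hpostOut hsrc hstay =>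
    rename_i sv f
    have hnone : sv.acts j₀ = none := by
      by_contra h
      exact hj₀holes (Or.inl ⟨hj₀, Option.ne_none_iff_isSome.mp h⟩)
    -- the index sets coincide
    have hsetI : {m | m ∈ I ∪ {j₀} ∧ (sv.acts m).isSome} =
        {m | m ∈ I ∧ (sv.acts m).isSome} := by
      ext m
      simp only [Set.mem_setOf_eq, Set.mem_union, Set.mem_singleton_iff]
      constructor
      · rintro ⟨hm | rfl, hs⟩
        · exact ⟨hm, hs⟩
        · rw [hnone] at hs; exact absurd hs (by simp)
      · rintro ⟨hm, hs⟩; exact ⟨Or.inl hm, hs⟩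
    have hmemI : ∀ m ∈ I ∪ {j₀}, (sv.acts m).isSome → m ∈ I ∧ m ≠ j₀ := by
      intro m hm hs
      have hmne : m ≠ j₀ := by
        rintro rfl; rw [hnone] at hs; exact absurd hs (by simp)
      rcases hm with hm | hm
      · exact ⟨hm, hmne⟩
      · exact absurd hm hmne
    have hupd : ∀ m ∈ I ∪ {j₀}, (sv.acts m).isSome →
        Function.update subs j₀ Q m = subs m := by
      intro m hm hs
      exact Function.update_of_ne (hmemI m hm hs).2 _ _
    have hleafQ : ∀ m ∈ I, ∀ k ∈ pleaves (subs m), k ∉ pleaves Q := by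
      intro m hm k hk
      have : k ∈ pleaves (PNet.node I subs J sorts svs) := by
        simp only [pleaves, Set.mem_iUnion]
        exact ⟨m, hm, hk⟩
      exact fun hq => Set.disjoint_left.mp hleaves this hq
    set src' : ι → S := fun i => if i ∈ pleaves Q then sq i else src i with hsrc'
    set tgt' : ι → S := fun i => if i ∈ pleaves Q then sq i else tgt i with htgt'
    refine ⟨⟨{j | j ∈ J \ {j₀} ∧ (sv.acts j).isSome} ∪
            ⋃ m ∈ {m | m ∈ I ∪ {j₀} ∧ (sv.acts m).isSome}, (f m).holes,
         β,
         fun v => (∀ m ∈ I ∪ {j₀}, ∀ a, sv.acts m = some a →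
            (f m).pred v ∧ (f m).act v = a v) ∧ sv.guard v,
         po, src', sv.res, tgt'⟩, ?_, ?_, ?_, rfl, ?_, fun v x => rfl, ?_, ?_⟩
    · show Sem (PNet.node (I ∪ {j₀}) (Function.update subs j₀ Q) (J \ {j₀}) sorts svs) _
      refine Sem.tr2 β po src' tgt' hsv ?_ ?_ ?_ ?_ ?_ ?_ ?_
      · intro m hm hs
        rw [hupd m hm hs]
        exact hsub m (hmemI m hm hs).1 hs
      · intro m hm hs
        exact hβdeep m (hmemI m hm hs).1 hs
      · intro j hj a ha
        exact hβtop j hj.1 a ha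
      · intro m hm hs v x hx
        rw [hupd m hm hs] at hx
        exact hpostIn m (hmemI m hm hs).1 hs v x hx
      · intro v x hx
        refine hpostOut v x ?_
        intro m hm hs
        have := hx m (Or.inl hm) hs
        rwa [hupd m (Or.inl hm) hs] at this
      · intro m hm hs k hk
        rw [hupd m hm hs] at hk
        have hm' := (hmemI m hm hs).1
        have hkQ : k ∉ pleaves Q := hleafQ m hm' k hk
        simp only [hsrc', htgt', if_neg hkQ]
        exact hsrc m hm' hs k hk
      · intro k hk
        by_cases hkQ : k ∈ pleaves Q
        · simp only [hsrc', htgt', if_pos hkQ]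
        · simp only [hsrc', htgt', if_neg hkQ]
          refine hstay k ?_
          intro m hm hs
          have := hk m (Or.inl hm) hs
          rwa [hupd m (Or.inl hm) hs] at this
    · -- holes coincide
      show _ = {j | j ∈ J ∧ (sv.acts j).isSome} ∪
          ⋃ m ∈ {m | m ∈ I ∧ (sv.acts m).isSome}, (f m).holes
      rw [hsetI]
      have hJ : {j | j ∈ J \ {j₀} ∧ (sv.acts j).isSome} =
          {j | j ∈ J ∧ (sv.acts j).isSome} := by
        ext j
        simp only [Set.mem_setOf_eq, Set.mem_diff, Set.mem_singleton_iff]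
        constructor
        · rintro ⟨⟨hj, _⟩, hs⟩; exact ⟨hj, hs⟩
        · rintro ⟨hj, hs⟩
          refine ⟨⟨hj, ?_⟩, hs⟩
          rintro rfl; rw [hnone] at hs; exact absurd hs (by simp)
      rw [hJ]
    · intro j _; rfl
    · -- predicates coincide
      intro v
      show ((∀ m ∈ I ∪ {j₀}, ∀ a, sv.acts m = some a → _) ∧ _) ↔
        ((∀ m ∈ I, ∀ a, sv.acts m = some a → _) ∧ _)
      constructor
      · rintro ⟨h, hg⟩
        exact ⟨fun m hm a ha => h m (Or.inl hm) a ha, hg⟩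
      · rintro ⟨h, hg⟩
        refine ⟨fun m hm a ha => ?_, hg⟩
        rcases hm with hm | hm
        · exact h m hm a ha
        · rw [Set.mem_singleton_iff] at hm; subst hm
          rw [hnone] at ha; exact absurd ha (by simp)
    · intro i hi
      constructor <;> simp [hsrc', htgt', hi]
    · intro i hi
      constructor <;> simp [hsrc', htgt', hi]

end FHPNets
end
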